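/- For a μ-strongly convex differentiable function L on ℝᵈ with minimizers θ₁ of L and θ₂ of L + φ where φ is differentiable with ‖∇φ(θ)‖₂ ≤ G for all θ, the minimizers satisfy ‖θ₁ - θ₂‖₂ ≤ G/μ. -/

import Mathlib

/-!
At a minimizer `x` of a `μ`-strongly convex function `f`, strong convexity on the segment
from `x` to any `y`, divided by the step `t` and with `t → 0`, gives the quadratic growth
`f x + μ/2 ‖y - x‖² ≤ f y`. Applying this to `L` at `θ₁` and to the (still `μ`-strongly convex)
`L + φ` at `θ₂` and adding yields `μ ‖θ₁ - θ₂‖² ≤ φ θ₁ - φ θ₂`. By the mean value inequality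
`φ` is `G`-Lipschitz, so `μ ‖θ₁ - θ₂‖² ≤ G ‖θ₁ - θ₂‖`.
-/

open Filter Set Topology NNReal

section

variable {E : Type*} [NormedAddCommGroup E] [NormedSpace ℝ E] {s : Set E} {m : ℝ}
  {f g : E → ℝ} {x y : E}

lemma StrongConvexOn.add_convexOn (hf : StrongConvexOn s m f) (hg : ConvexOn ℝ s g) :
    StrongConvexOn s m (f + g) :=
  (hf.add (uniformConvexOn_zero.2 hg)).mono fun r => by simp

lemma StrongConvexOn.add_sq_norm_sub_le_of_isMinOn (hf : StrongConvexOn s m f)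
    (hx : IsMinOn f s x) (hxs : x ∈ s) (hys : y ∈ s) :
    f x + m / 2 * ‖y - x‖ ^ 2 ≤ f y := by
  set c := m / 2 * ‖y - x‖ ^ 2
  have hsegment : ∀ t ∈ Ioo (0 : ℝ) 1, f x + (1 - t) * c ≤ f y := by
    rintro t ⟨ht₀, ht₁⟩
    have ht₁' : 0 ≤ 1 - t := sub_nonneg.2 ht₁.le
    have hsum : t + (1 - t) = 1 := by ring
    have hconv := hf.2 hys hxs ht₀.le ht₁' hsum
    have hmin : f x ≤ f (t • y + (1 - t) • x) := hx (hf.1 hys hxs ht₀.le ht₁' hsum)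
    simp only [smul_eq_mul] at hconv
    have : t * (f x + (1 - t) * c) ≤ t * f y := by linear_combination hmin.trans hconv
    exact le_of_mul_le_mul_left this ht₀
  have hlim : Tendsto (fun t : ℝ => f x + (1 - t) * c) (𝓝[>] 0) (𝓝 (f x + c)) := by
    have hcont : Continuous (fun t : ℝ => f x + (1 - t) * c) := by fun_prop
    simpa using (hcont.tendsto 0).mono_left nhdsWithin_le_nhds
  exact le_of_tendsto hlim (eventually_of_mem (Ioo_mem_nhdsGT one_pos) hsegment)

lemma StrongConvexOn.mul_sq_norm_sub_le_of_isMinOn_add (hf : StrongConvexOn s m f)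
    (hg : ConvexOn ℝ s g) (hx : IsMinOn f s x) (hy : IsMinOn (f + g) s y) (hxs : x ∈ s)
    (hys : y ∈ s) : m * ‖x - y‖ ^ 2 ≤ g x - g y := by
  have hgrowth_f := hf.add_sq_norm_sub_le_of_isMinOn hx hxs hys
  have hgrowth_fg := (hf.add_convexOn hg).add_sq_norm_sub_le_of_isMinOn hy hys hxs
  rw [norm_sub_rev] at hgrowth_f
  simp only [Pi.add_apply] at hgrowth_fg
  linarith

lemma StrongConvexOn.norm_sub_le_div_of_isMinOn_add (hm : 0 < m) (hf : StrongConvexOn s m f)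
    (hg : ConvexOn ℝ s g) {K : ℝ≥0} (hgK : LipschitzOnWith K g s) (hx : IsMinOn f s x)
    (hy : IsMinOn (f + g) s y) (hxs : x ∈ s) (hys : y ∈ s) : ‖x - y‖ ≤ K / m := by
  have hlip : g x - g y ≤ K * ‖x - y‖ := by
    simpa [Real.dist_eq, dist_eq_norm] using (le_abs_self _).trans (hgK.dist_le_mul x hxs y hys)
  rcases (norm_nonneg (x - y)).eq_or_lt with h0 | hpos
  · rw [← h0]
    exact div_nonneg K.coe_nonneg hm.le
  · rw [le_div_iff₀ hm]
    refine le_of_mul_le_mul_right ?_ hpos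
    calc ‖x - y‖ * m * ‖x - y‖ = m * ‖x - y‖ ^ 2 := by ring
      _ ≤ g x - g y := hf.mul_sq_norm_sub_le_of_isMinOn_add hg hx hy hxs hys
      _ ≤ K * ‖x - y‖ := hlip

end

theorem stmt_17_general (d : ℕ) (μ G : ℝ) (hμ : 0 < μ) (hG : 0 ≤ G)
    (L φ : EuclideanSpace ℝ (Fin d) → ℝ)
    (hφdiff : Differentiable ℝ φ)
    (hLsc : StrongConvexOn Set.univ μ L)
    (hφconv : ConvexOn ℝ Set.univ φ)
    (hφgrad : ∀ θ, ‖gradient φ θ‖ ≤ G)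
    (θ₁ θ₂ : EuclideanSpace ℝ (Fin d))
    (hθ₁ : ∀ θ, L θ₁ ≤ L θ)
    (hθ₂ : ∀ θ, L θ₂ + φ θ₂ ≤ L θ + φ θ) :
    ‖θ₁ - θ₂‖ ≤ G / μ := by
  have hφlip : LipschitzWith ⟨G, hG⟩ φ := by
    refine lipschitzWith_of_nnnorm_fderiv_le hφdiff fun θ => ?_
    change ‖fderiv ℝ φ θ‖ ≤ G
    simpa [gradient] using hφgrad θ
  exact hLsc.norm_sub_le_div_of_isMinOn_add hμ hφconv hφlip.lipschitzOnWith
    (isMinOn_univ_iff.2 hθ₁) (isMinOn_univ_iff.2 hθ₂) (mem_univ _) (mem_univ _)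

/-- Minimizer stability under strongly convex perturbation: if `L` is differentiable and
`μ`-strongly convex, `φ` is differentiable and convex with `‖∇φ‖ ≤ G` everywhere, `θ₁`
minimizes `L` and `θ₂` minimizes `L + φ`, then `‖θ₁ - θ₂‖ ≤ G/μ`. -/
theorem stmt_17 (d : ℕ) (μ G : ℝ) (hμ : 0 < μ) (hG : 0 ≤ G)
    (L φ : EuclideanSpace ℝ (Fin d) → ℝ)
    (hLdiff : Differentiable ℝ L) (hφdiff : Differentiable ℝ φ)
    (hLsc : StrongConvexOn Set.univ μ L)
    (hφconv : ConvexOn ℝ Set.univ φ)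
    (hφgrad : ∀ θ, ‖gradient φ θ‖ ≤ G)
    (θ₁ θ₂ : EuclideanSpace ℝ (Fin d))
    (hθ₁ : ∀ θ, L θ₁ ≤ L θ)
    (hθ₂ : ∀ θ, L θ₂ + φ θ₂ ≤ L θ + φ θ) :
    ‖θ₁ - θ₂‖ ≤ G / μ :=
  stmt_17_general d μ G hμ hG L φ hφdiff hLsc hφconv hφgrad θ₁ θ₂ hθ₁ hθ₂
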